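/- In any λC-model, the interpretation of case-binding composition is computed by the comp morphism: for case-bindings θ and φ with free variables in Γ (of length k), ⟨⟦θ⟧_Γ, ⟦φ⟧_Γ⟩ ; comp = ⟦θ∘φ⟧_Γ as morphisms D^k → D^n, provided diagram (D6) (case applied to fail yields fail) commutes. -/

import Mathlib

/- Terms of the lambda calculus with `n` constructors (de Bruijn indices).
`Ob n` plays the role of `Option (Tm n)`: a case-binding is a partial map
`Fin n → Ob n` from constructors to terms. -/
mutual
inductive Tm (n : ℕ) : Type where
  | var : ℕ → Tm n
  | app : Tm n → Tm n → Tm n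
  | lam : Tm n → Tm n
  | cst : Fin n → Tm n
  | cas : (Fin n → Ob n) → Tm n → Tm n
inductive Ob (n : ℕ) : Type where
  | none : Ob n
  | some : Tm n → Ob n
end

namespace LC

variable {n : ℕ}

/- Shift free de Bruijn indices `≥ k` by `d`. -/
mutual
def lift (d k : ℕ) : Tm n → Tm n
  | .var i => .var (if i < k then i else i + d)
  | .app t u => .app (lift d k t) (lift d k u)
  | .lam t => .lam (lift d (k+1) t)
  | .cst c => .cst c
  | .cas θ t => .cas (fun c => liftO d k (θ c)) (lift d k t)
def liftO (d k : ℕ) : Ob n → Ob n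
  | .none => .none
  | .some t => .some (lift d k t)
end

/- Lift a case-binding (used for the CaseLam rule, where the bound variable
must not occur free in the binding). -/
def liftB (θ : Fin n → Ob n) : Fin n → Ob n := fun c => liftO 1 0 (θ c)

/- Substitution of `u` for the variable `k` (capture-avoiding). -/
mutual
def subst (u : Tm n) (k : ℕ) : Tm n → Tm n
  | .var i => if i < k then .var i else if i = k then lift k 0 u else .var (i-1)
  | .app t v => .app (subst u k t) (subst u k v)
  | .lam t => .lam (subst u (k+1) t)
  | .cst c => .cst c
  | .cas θ t => .cas (fun c => substO u k (θ c)) (subst u k t)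
def substO (u : Tm n) (k : ℕ) : Ob n → Ob n
  | .none => .none
  | .some t => .some (subst u k t)
end

/- `{θ}·(-)` applied inside an optional branch. -/
def casO (θ : Fin n → Ob n) : Ob n → Ob n
  | .none => .none
  | .some u => .some (.cas θ u)

/- Composition of case-bindings: `(θ∘φ)(c) = {θ}·φ(c)` for `c ∈ dom φ`. -/
def compB (θ φ : Fin n → Ob n) : Fin n → Ob n := fun c => casO θ (φ c)

/- One-step reduction of the lambda calculus with constructors:
AppLam, LamApp, CaseCons, CaseApp, CaseLam, CaseCase, closed under all contexts. -/
inductive Step : Tm n → Tm n → Prop where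
  | appLam (t u : Tm n) : Step (.app (.lam t) u) (subst u 0 t)
  | lamApp (t : Tm n) : Step (.lam (.app (lift 1 0 t) (.var 0))) t
  | caseCons (θ : Fin n → Ob n) (c : Fin n) (u : Tm n) :
      θ c = .some u → Step (.cas θ (.cst c)) u
  | caseApp (θ : Fin n → Ob n) (t u : Tm n) :
      Step (.cas θ (.app t u)) (.app (.cas θ t) u)
  | caseLam (θ : Fin n → Ob n) (t : Tm n) :
      Step (.cas θ (.lam t)) (.lam (.cas (liftB θ) t))
  | caseCase (θ φ : Fin n → Ob n) (t : Tm n) :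
      Step (.cas θ (.cas φ t)) (.cas (compB θ φ) t)
  | appL {t t' : Tm n} (u : Tm n) : Step t t' → Step (.app t u) (.app t' u)
  | appR (t : Tm n) {u u' : Tm n} : Step u u' → Step (.app t u) (.app t u')
  | lamC {t t' : Tm n} : Step t t' → Step (.lam t) (.lam t')
  | casT (θ : Fin n → Ob n) {t t' : Tm n} : Step t t' → Step (.cas θ t) (.cas θ t')
  | casB (θ : Fin n → Ob n) (c : Fin n) {u u' : Tm n} (t : Tm n) :
      θ c = .some u → Step u u' →
      Step (.cas θ t) (.cas (Function.update θ c (.some u')) t)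

/- One-step reduction by the CaseCase rule only (closed under all contexts). -/
inductive StepCC : Tm n → Tm n → Prop where
  | caseCase (θ φ : Fin n → Ob n) (t : Tm n) :
      StepCC (.cas θ (.cas φ t)) (.cas (compB θ φ) t)
  | appL {t t' : Tm n} (u : Tm n) : StepCC t t' → StepCC (.app t u) (.app t' u)
  | appR (t : Tm n) {u u' : Tm n} : StepCC u u' → StepCC (.app t u) (.app t u')
  | lamC {t t' : Tm n} : StepCC t t' → StepCC (.lam t) (.lam t')
  | casT (θ : Fin n → Ob n) {t t' : Tm n} : StepCC t t' → StepCC (.cas θ t) (.cas θ t')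
  | casB (θ : Fin n → Ob n) (c : Fin n) {u u' : Tm n} (t : Tm n) :
      θ c = .some u → StepCC u u' →
      StepCC (.cas θ t) (.cas (Function.update θ c (.some u')) t)

/- One-step reduction λC⁻ : every rule except CaseCase (closed under all contexts). -/
inductive StepM : Tm n → Tm n → Prop where
  | appLam (t u : Tm n) : StepM (.app (.lam t) u) (subst u 0 t)
  | lamApp (t : Tm n) : StepM (.lam (.app (lift 1 0 t) (.var 0))) t
  | caseCons (θ : Fin n → Ob n) (c : Fin n) (u : Tm n) :
      θ c = .some u → StepM (.cas θ (.cst c)) u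
  | caseApp (θ : Fin n → Ob n) (t u : Tm n) :
      StepM (.cas θ (.app t u)) (.app (.cas θ t) u)
  | caseLam (θ : Fin n → Ob n) (t : Tm n) :
      StepM (.cas θ (.lam t)) (.lam (.cas (liftB θ) t))
  | appL {t t' : Tm n} (u : Tm n) : StepM t t' → StepM (.app t u) (.app t' u)
  | appR (t : Tm n) {u u' : Tm n} : StepM u u' → StepM (.app t u) (.app t u')
  | lamC {t t' : Tm n} : StepM t t' → StepM (.lam t) (.lam t')
  | casT (θ : Fin n → Ob n) {t t' : Tm n} : StepM t t' → StepM (.cas θ t) (.cas θ t')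
  | casB (θ : Fin n → Ob n) (c : Fin n) {u u' : Tm n} (t : Tm n) :
      θ c = .some u → StepM u u' →
      StepM (.cas θ t) (.cas (Function.update θ c (.some u')) t)

/- A term is defined when none of its subterms is a match failure `{θ}·c` with
`c ∉ dom θ`. -/
inductive Defined : Tm n → Prop where
  | var (i : ℕ) : Defined (.var i)
  | cst (c : Fin n) : Defined (.cst c)
  | app {t u : Tm n} : Defined t → Defined u → Defined (.app t u)
  | lam {t : Tm n} : Defined t → Defined (.lam t)
  | cas {θ : Fin n → Ob n} {t : Tm n} :
      (∀ c u, θ c = .some u → Defined u) → Defined t →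
      (∀ c, t = .cst c → θ c ≠ .none) → Defined (.cas θ t)

/- Hereditarily defined: every reduct (in any number of steps) is defined. -/
def HD (t : Tm n) : Prop := ∀ u, Relation.ReflTransGen Step t u → Defined u

section Completion
variable [NeZero n]

/- The canonical match failure `{}·c₁` used to fill missing branches. -/
def failTm : Tm n := .cas (fun _ => .none) (.cst 0)

/- Case-completion: replace every case-binding by its total completion,
filling each missing branch with `{}·c₁`. -/
mutual
def cpl : Tm n → Tm n
  | .var i => .var i
  | .app t u => .app (cpl t) (cpl u)
  | .lam t => .lam (cpl t)
  | .cst c => .cst c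
  | .cas θ t => .cas (fun c => .some (cplO (θ c))) (cpl t)
def cplO : Ob n → Tm n
  | .none => failTm
  | .some u => cpl u
end

end Completion

/- The structural measure μ. -/
mutual
def mes : Tm n → ℕ
  | .var _ => 1
  | .cst _ => 1
  | .lam t => mes t + 1
  | .app t u => mes t + mes u
  | .cas θ t => mes t * ((∑ c : Fin n, mesO (θ c)) + 2)
def mesO : Ob n → ℕ
  | .none => 0
  | .some t => mes t
end

end LC

open CategoryTheory Limits MonoidalCategory CartesianClosed

namespace LC

noncomputable section

variable {C : Type*} [Category C] [CartesianMonoidalCategory C] [MonoidalClosed C]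

attribute [local instance] BraidedCategory.ofCartesianMonoidalCategory

/-- Evaluation in the convention `B^A × A ⟶ B`. -/
def ev' (A B : C) : (A ⟹ B) ⊗ A ⟶ B := (β_ (A ⟹ B) A).hom ≫ (ihom.ev A).app B

/-- Currying in the convention `Y × A ⟶ B` gives `Y ⟶ B^A`. -/
def curry' {Y A B : C} (f : Y ⊗ A ⟶ B) : Y ⟶ A ⟹ B :=
  MonoidalClosed.curry ((β_ A Y).hom ≫ f)

/-- A categorical model of the untyped lambda calculus with `n` constructors:
a Cartesian closed category `C`, an object `D`, morphisms `app : D ⟶ D^D` and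
`lam : D^D ⟶ D`, points `c_i` and `fail`, and a morphism
`case : D^n × D ⟶ D`, such that the six diagrams (D1)–(D6) commute. -/
structure LCModel (C : Type*) [Category C] [CartesianMonoidalCategory C]
    [MonoidalClosed C] (n : ℕ) where
  D : C
  ap : D ⟶ D ⟹ D
  lm : (D ⟹ D) ⟶ D
  cs : Fin n → (𝟙_ C ⟶ D)
  fl : 𝟙_ C ⟶ D
  cse : (∏ᶜ fun _ : Fin n => D) ⊗ D ⟶ D
  /- (D1) -/
  d1 : lm ≫ ap = 𝟙 (D ⟹ D)
  d1' : ap ≫ lm = 𝟙 D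
  /- (D2) : case ∘ (id × c_i) = π_i -/
  d2 : ∀ i : Fin n,
    CartesianMonoidalCategory.lift (𝟙 (∏ᶜ fun _ : Fin n => D))
        (CartesianMonoidalCategory.toUnit _ ≫ cs i) ≫ cse =
      Pi.π (fun _ : Fin n => D) i
  /- (D3) : the CaseApp diagram -/
  d3 : (cse ⊗ₘ 𝟙 D) ≫ (ap ⊗ₘ 𝟙 D) ≫ ev' D D =
    (α_ (∏ᶜ fun _ : Fin n => D) D D).hom ≫
      (𝟙 (∏ᶜ fun _ : Fin n => D) ⊗ₘ (ap ⊗ₘ 𝟙 D)) ≫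
      (𝟙 (∏ᶜ fun _ : Fin n => D) ⊗ₘ ev' D D) ≫ cse
  /- (D4) : the CaseLam diagram -/
  d4 : curry' ((α_ (∏ᶜ fun _ : Fin n => D) (D ⟹ D) D).hom ≫
        (𝟙 (∏ᶜ fun _ : Fin n => D) ⊗ₘ ev' D D) ≫ cse) ≫ lm =
      (𝟙 (∏ᶜ fun _ : Fin n => D) ⊗ₘ lm) ≫ cse
  /- (D5) : the CaseCase diagram, using the case-composition morphism comp -/
  d5 : ((Pi.lift fun i : Fin n =>
          (𝟙 (∏ᶜ fun _ : Fin n => D) ⊗ₘ Pi.π (fun _ : Fin n => D) i) ≫ cse) ⊗ₘ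
        𝟙 D) ≫ cse =
      (α_ (∏ᶜ fun _ : Fin n => D) (∏ᶜ fun _ : Fin n => D) D).hom ≫
        (𝟙 (∏ᶜ fun _ : Fin n => D) ⊗ₘ cse) ≫ cse
  /- (D6) : case applied to fail yields fail -/
  d6 : (𝟙 (∏ᶜ fun _ : Fin n => D) ⊗ₘ fl) ≫ cse =
      CartesianMonoidalCategory.snd (∏ᶜ fun _ : Fin n => D) (𝟙_ C) ≫ fl

variable {n : ℕ}

/-- The object `D^n` of case-bindings. -/
def LCModel.P (M : LCModel C n) : C := ∏ᶜ fun _ : Fin n => M.D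

/-- The case-composition morphism `comp : D^n × D^n ⟶ D^n`, pairing of the
morphisms `(id × π_i) ; case`. -/
def LCModel.comp (M : LCModel C n) : M.P ⊗ M.P ⟶ M.P :=
  Pi.lift fun i : Fin n => (𝟙 M.P ⊗ₘ Pi.π (fun _ : Fin n => M.D) i) ≫ M.cse

/-- The object `D^k` interpreting a context of length `k`. -/
def LCModel.pow (M : LCModel C n) : ℕ → C
  | 0 => 𝟙_ C
  | k+1 => M.pow k ⊗ M.D

/-- Projection interpreting the de Bruijn variable `i` in a context of
length `k` (junk for out-of-range variables). -/
def LCModel.vproj (M : LCModel C n) : (k i : ℕ) → (M.pow k ⟶ M.D)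
  | 0, _ => CartesianMonoidalCategory.toUnit _ ≫ M.fl
  | _+1, 0 => CartesianMonoidalCategory.snd _ _
  | k+1, i+1 => CartesianMonoidalCategory.fst _ _ ≫ LCModel.vproj M k i

/- Interpretation of terms (and, mutually, of optional case branches,
undefined branches being interpreted by `fail`) in a λC-model. -/
mutual
def LCModel.interp (M : LCModel C n) (k : ℕ) : Tm n → (M.pow k ⟶ M.D)
  | .var i => M.vproj k i
  | .app t u =>
      CartesianMonoidalCategory.lift (M.interp k t) (M.interp k u) ≫
        (M.ap ⊗ₘ 𝟙 M.D) ≫ ev' M.D M.D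
  | .lam t => curry' (M.interp (k+1) t) ≫ M.lm
  | .cst c => CartesianMonoidalCategory.toUnit _ ≫ M.cs c
  | .cas θ t =>
      CartesianMonoidalCategory.lift (Pi.lift fun c : Fin n => M.interpO k (θ c))
        (M.interp k t) ≫ M.cse
def LCModel.interpO (M : LCModel C n) (k : ℕ) : Ob n → (M.pow k ⟶ M.D)
  | .none => CartesianMonoidalCategory.toUnit _ ≫ M.fl
  | .some u => M.interp k u
end

/-- Interpretation of a case-binding as a morphism `D^k ⟶ D^n`. -/
def LCModel.interpB (M : LCModel C n) (k : ℕ) (θ : Fin n → Ob n) :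
    M.pow k ⟶ M.P :=
  Pi.lift fun c : Fin n => M.interpO k (θ c)

/-- Free variables of a term are among the first `k` de Bruijn indices. -/
inductive FvB : ℕ → Tm n → Prop where
  | var {k i : ℕ} : i < k → FvB k (.var i)
  | cst {k : ℕ} (c : Fin n) : FvB k (.cst c)
  | app {k : ℕ} {t u : Tm n} : FvB k t → FvB k u → FvB k (.app t u)
  | lam {k : ℕ} {t : Tm n} : FvB (k+1) t → FvB k (.lam t)
  | cas {k : ℕ} {θ : Fin n → Ob n} {t : Tm n} :
      (∀ c u, θ c = .some u → FvB k u) → FvB k t → FvB k (.cas θ t)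

/-! Both sides are compared componentwise. The `c`-th component of `⟨⟦θ⟧, ⟦φ⟧⟩ ; comp` is
`case (⟦θ⟧, ⟦φ c⟧)`. When `φ c` is a term `u` this is literally `⟦{θ}·u⟧`; when `φ c` is
undefined, `⟦φ c⟧` is `fail` and (D6) turns the whole component into `fail`, which is how the
undefined branch `(θ∘φ) c` is interpreted. -/

namespace LCModel

variable (M : LCModel C n)

-- `f` is typed into `∏ᶜ`, not `M.P`: `rw` and `simp` do not see through the definition `P`.
lemma lift_interpB_comp_π (k : ℕ) (f : M.pow k ⟶ ∏ᶜ fun _ : Fin n => M.D)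
    (φ : Fin n → Ob n) (c : Fin n) :
    (CartesianMonoidalCategory.lift f (M.interpB k φ) ≫ M.comp) ≫ Pi.π (fun _ : Fin n => M.D) c =
      CartesianMonoidalCategory.lift f (M.interpO k (φ c)) ≫ M.cse := by
  simp [comp, P, interpB]

lemma lift_fail_cse {X : C} (f : X ⟶ ∏ᶜ fun _ : Fin n => M.D) :
    CartesianMonoidalCategory.lift f (CartesianMonoidalCategory.toUnit X ≫ M.fl) ≫ M.cse =
      CartesianMonoidalCategory.toUnit X ≫ M.fl := by
  have hsplit : CartesianMonoidalCategory.lift f (CartesianMonoidalCategory.toUnit X ≫ M.fl) =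
      CartesianMonoidalCategory.lift f (CartesianMonoidalCategory.toUnit X) ≫
        (𝟙 (∏ᶜ fun _ : Fin n => M.D) ⊗ₘ M.fl) := by
    rw [CartesianMonoidalCategory.lift_map, Category.comp_id]
  rw [hsplit, Category.assoc, M.d6, ← Category.assoc, CartesianMonoidalCategory.lift_snd]

lemma interpO_casO (k : ℕ) (θ : Fin n → Ob n) (o : Ob n) :
    M.interpO k (casO θ o) =
      CartesianMonoidalCategory.lift (M.interpB k θ) (M.interpO k o) ≫ M.cse := by
  cases o with
  | none => exact (M.lift_fail_cse _).symm
  | some u => rfl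

end LCModel

/-- In any λC-model, the interpretation of case-binding composition is computed
by the `comp` morphism: `⟨⟦θ⟧_Γ, ⟦φ⟧_Γ⟩ ; comp = ⟦θ∘φ⟧_Γ` (diagram (D6) is
part of the model). -/
theorem interpB_comp (M : LCModel C n) (k : ℕ) (θ φ : Fin n → Ob n)
    (hθ : ∀ c u, θ c = .some u → FvB k u)
    (hφ : ∀ c u, φ c = .some u → FvB k u) :
    CartesianMonoidalCategory.lift (M.interpB k θ) (M.interpB k φ) ≫ M.comp =
      M.interpB k (compB θ φ) := by
  refine Pi.hom_ext _ _ fun c => ?_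
  calc _ = CartesianMonoidalCategory.lift (M.interpB k θ) (M.interpO k (φ c)) ≫ M.cse :=
        M.lift_interpB_comp_π k _ φ c
    _ = M.interpO k (casO θ (φ c)) := (M.interpO_casO k θ (φ c)).symm
    _ = M.interpB k (compB θ φ) ≫ Pi.π _ c :=
        (Pi.lift_π (fun c => M.interpO k (compB θ φ c)) c).symm

end
end LC
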